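/- arXiv:1108.3438 — 10 statements merged into one kernel-verified Lean document; each statement's English description precedes it below -/
import Mathlib

section
/- Let r > 1 and define G(z) = r·(1 - (1 - 1/z)^{1/r}) for z in the upper half-plane, using the principal branch of the power w^{1/r} on ℂ ∖ (-∞, 0]. Then for every x ∈ (0,1), the limit as y → 0⁺ of Im G(x + iy) equals -r·sin(π/r)·((1-x)/x)^{1/r}. -/
open Real Complex Filter Topology

/-! As `y → 0⁺`, the point `1 - 1/(x + iy)` tends to the negative real `1 - 1/x` from the
closed upper half-plane, where the principal power `w ↦ w ^ s` is continuous (the branch cut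
is approached from the side on which `arg = π`). At a negative real `t` this power equals
`|t| ^ s · e^{iπs}`, whose imaginary part gives the boundary value. -/

namespace Complex

theorem continuousWithinAt_cpow_const_of_re_neg_of_im_zero {z : ℂ} (hre : z.re < 0)
    (him : z.im = 0) (s : ℂ) : ContinuousWithinAt (· ^ s) {w : ℂ | 0 ≤ w.im} z := by
  have hz : z ≠ 0 := fun h => by simp [h] at hre
  have hexp : ContinuousWithinAt (fun w => exp (log w * s)) {w : ℂ | 0 ≤ w.im} z :=
    continuous_exp.continuousAt.comp_continuousWithinAt
      ((continuousWithinAt_log_of_re_neg_of_im_zero hre him).mul continuousWithinAt_const)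
  refine hexp.congr_of_eventuallyEq ?_ (cpow_def_of_ne_zero hz s)
  filter_upwards [nhdsWithin_le_nhds (isOpen_ne.mem_nhds hz)] with w hw
  exact cpow_def_of_ne_zero hw s

theorem im_one_sub_inv_nonneg {z : ℂ} (hz : 0 ≤ z.im) : 0 ≤ (1 - z⁻¹).im := by
  rw [sub_im, one_im, inv_im, zero_sub, neg_div, neg_neg]
  exact div_nonneg hz (normSq_nonneg z)

theorem im_ofReal_cpow_ofReal_of_nonpos {t : ℝ} (ht : t ≤ 0) (s : ℝ) :
    ((t : ℂ) ^ (s : ℂ)).im = (-t) ^ s * Real.sin (π * s) := by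
  rw [ofReal_cpow_of_nonpos ht, ← ofReal_neg, ← ofReal_cpow (neg_nonneg.2 ht), im_ofReal_mul,
    show (π : ℂ) * I * s = ((π * s : ℝ) : ℂ) * I by rw [ofReal_mul]; ring, exp_ofReal_mul_I_im]

end Complex

theorem stmt3_general (r : ℝ)
    (G : ℂ → ℂ)
    (hG : ∀ z : ℂ, G z = (r : ℂ) * (1 - (1 - 1/z) ^ ((1/r : ℂ))))
    (x : ℝ) (hx0 : 0 < x) (hx1 : x < 1) :
    Tendsto (fun y : ℝ => (G (x + y * Complex.I)).im)
      (nhdsWithin 0 (Set.Ioi 0))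
      (nhds (-r * Real.sin (π / r) * ((1 - x)/x) ^ (1/r : ℝ))) := by
  have hw₀ : 1 - 1 / x < 0 := by rw [sub_neg, lt_div_iff₀ hx0]; linarith
  have hpath : Tendsto (fun y : ℝ => 1 - 1 / ((x : ℂ) + y * I)) (𝓝[>] 0)
      (𝓝[{w | 0 ≤ w.im}] ((1 - 1 / x : ℝ) : ℂ)) := by
    refine tendsto_nhdsWithin_of_tendsto_nhds_of_eventually_within _ ?_ ?_
    · have hcont : ContinuousAt (fun y : ℝ => 1 - 1 / ((x : ℂ) + y * I)) 0 :=
        continuousAt_const.sub (continuousAt_const.div (by fun_prop) (by simpa using hx0.ne'))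
      simpa using hcont.tendsto.mono_left nhdsWithin_le_nhds
    · exact eventually_nhdsWithin_of_forall fun y hy => by
        simpa [one_div] using im_one_sub_inv_nonneg (z := x + y * I) (by simpa using le_of_lt hy)
  have hpow := (continuousWithinAt_cpow_const_of_re_neg_of_im_zero (by simpa using hw₀)
    (ofReal_im _) (1 / r : ℂ)).tendsto.comp hpath
  have hval : (((1 - 1 / x : ℝ) : ℂ) ^ (1 / r : ℂ)).im =
      ((1 - x) / x) ^ (1 / r : ℝ) * Real.sin (π / r) := by
    rw [show (1 / r : ℂ) = ((1 / r : ℝ) : ℂ) by push_cast; rfl,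
      im_ofReal_cpow_ofReal_of_nonpos hw₀.le]
    congr 2
    · field_simp
      ring
    · ring
  have him := ((continuous_im.tendsto _).comp hpow).const_mul (-r)
  rw [hval] at him
  convert him using 2
  · simp [hG]
  · ring

/-- for `r > 1` and `G(z) = r·(1 - (1 - 1/z)^{1/r})` (principal branch
of the power, which agrees with the branch with `Im log ∈ (-π,π)` on `ℂ ∖ (-∞,0]`),
for every `x ∈ (0,1)` the boundary value of `Im G` is
`-r·sin(π/r)·((1-x)/x)^{1/r}`. -/
theorem stmt3 (r : ℝ) (hr : 1 < r)
    (G : ℂ → ℂ)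
    (hG : ∀ z : ℂ, G z = (r : ℂ) * (1 - (1 - 1/z) ^ ((1/r : ℂ))))
    (x : ℝ) (hx0 : 0 < x) (hx1 : x < 1) :
    Tendsto (fun y : ℝ => (G (x + y * Complex.I)).im)
      (nhdsWithin 0 (Set.Ioi 0))
      (nhds (-r * Real.sin (π / r) * ((1 - x)/x) ^ (1/r : ℝ))) :=
  stmt3_general r G hG x hx0 hx1
end

section
/- Define for α ∈ (0,2], r > 0, s ∈ ℂ∖{0}, and z in a truncated cone Γ = {z ∈ ℂ₊ : Im z > M, Im z > η|Re z|} with M large, F^α_{s,r}(z) = 1/G^α_{s,r}(z) where G^α_{s,r}(z) = -r^{1/α}·((1 - (1 - s·(-1/z)^α)^{1/r})/s)^{1/α} with the branch conventions: w^{1/α}, w^α defined via the logarithm with imaginary part in (0,2π) on ℂ∖[0,∞), and w^{1/r} defined via the logarithm with imaginary part in (-π,π) on ℂ∖(-∞,0]. Then for all u > 0, F^α_{s,r} ∘ F^α_{us,u} = F^α_{us,ur} holds on Γ (for M sufficiently large). -/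
/-!
Write `X = (-1/z)^α` and `φ_{s,r}(X) = (1 - (1 - sX)^{1/r})/s`, so that
`G_{s,r}(z) = -r^{1/α} φ_{s,r}(X)^{1/α}`. Once the `1/α`-th power in `G_{us,u}(z)` can be
undone, `(-1/F_{us,u}(z))^α = u φ_{us,u}(X)`, and the law reduces to
`φ_{s,r}(u φ_{us,u}(X)) = u φ_{us,ur}(X)`, i.e. to
`((1 - usX)^{1/u})^{1/r} = (1 - usX)^{1/(ur)}`, which holds for small `X`.

The `1/α`-th power can be undone as long as the argument of `φ_{us,u}(X)`, taken in `(0, 2π)`,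
stays below `2πα`. On the cone `θ < arg z < π - θ` with `θ = arctan η`, and `X → 0` with
argument `α(π - arg z) ∈ (αθ, α(π - θ))`; since `φ_{us,u}(X)/X → 1/u`, the argument of
`φ_{us,u}(X)` moves by less than `αθ` and stays in `(0, απ)`, which lies in `(0, 2π)` because
`α ≤ 2`.
-/

open Real Complex Filter

/-- The power `z ^ w` taken with the branch of the logarithm whose imaginary part
lies in `(0, 2π)`, defined on `ℂ ∖ [0,∞)` (branch (1) of the paper):
`log₁ z = log(-z) + iπ` has imaginary part in `(0,2π)` for `z ∉ [0,∞)`. -/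
noncomputable def cpow1 (z w : ℂ) : ℂ :=
  Complex.exp (w * (Complex.log (-z) + Real.pi * Complex.I))

/-- `G^α_{s,r}(z) = -r^{1/α}·((1 - (1 - s·(-1/z)^α)^{1/r})/s)^{1/α}`, where the
`α` and `1/α` powers use the branch with `Im log ∈ (0,2π)` and the `1/r` power is
the principal one (branch with `Im log ∈ (-π,π)` on `ℂ ∖ (-∞,0]`). -/
noncomputable def Gsr (α : ℝ) (s : ℂ) (r : ℝ) (z : ℂ) : ℂ :=
  -((r : ℂ) ^ ((1/α : ℂ))) *
    cpow1 ((1 - (1 - s * cpow1 (-1/z) (α : ℂ)) ^ ((1/r : ℂ))) / s) ((1/α : ℂ))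

/-- `F^α_{s,r} = 1/G^α_{s,r}`. -/
noncomputable def Fsr (α : ℝ) (s : ℂ) (r : ℝ) (z : ℂ) : ℂ := 1 / Gsr α s r z

open Set Topology

noncomputable def log1 (z : ℂ) : ℂ := Complex.log (-z) + π * I

lemma cpow1_eq_exp_log1 (z w : ℂ) : cpow1 z w = exp (w * log1 z) := rfl

lemma cpow1_ne_zero (z w : ℂ) : cpow1 z w ≠ 0 := Complex.exp_ne_zero _

lemma exp_log1 {z : ℂ} (hz : z ≠ 0) : exp (log1 z) = z := by
  rw [log1, Complex.exp_add, exp_log (neg_ne_zero.2 hz), exp_pi_mul_I]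
  ring

lemma log1_im_pos (z : ℂ) : 0 < (log1 z).im := by
  simp only [log1, add_im, log_im, mul_im, ofReal_re, ofReal_im, I_re, I_im]
  linarith [neg_pi_lt_arg (-z)]

lemma log1_exp {v : ℂ} (h0 : 0 < v.im) (h1 : v.im < 2 * π) : log1 (exp v) = v := by
  have h : -exp v = exp (v - π * I) := by
    rw [Complex.exp_sub, exp_pi_mul_I]
    ring
  have him : (v - π * I).im = v.im - π := by simp
  rw [log1, h, log_exp (by rw [him]; linarith) (by rw [him]; linarith)]
  ring

lemma cpow1_exp {v : ℂ} (h0 : 0 < v.im) (h1 : v.im < 2 * π) (w : ℂ) :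
    cpow1 (exp v) w = exp (w * v) := by
  rw [cpow1_eq_exp_log1, log1_exp h0 h1]

lemma log1_ofReal_mul {u : ℝ} (hu : 0 < u) {z : ℂ} (hz : z ≠ 0) :
    log1 (u * z) = Real.log u + log1 z := by
  rw [log1, log1, ← mul_neg, log_ofReal_mul hu (neg_ne_zero.2 hz)]
  ring

lemma cpow1_ofReal_mul {u : ℝ} (hu : 0 < u) {z : ℂ} (hz : z ≠ 0) (w : ℂ) :
    cpow1 (u * z) w = (u : ℂ) ^ w * cpow1 z w := by
  rw [cpow1_eq_exp_log1, cpow1_eq_exp_log1, log1_ofReal_mul hu hz,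
    cpow_def_of_ne_zero (ofReal_ne_zero.2 hu.ne'), ← ofReal_log hu.le, ← Complex.exp_add]
  ring_nf

lemma log1_mul_im {X k : ℂ} (hX : X ≠ 0) (hk : k ≠ 0) (h0 : 0 < (log1 X).im + arg k)
    (h1 : (log1 X).im + arg k < 2 * π) : (log1 (X * k)).im = (log1 X).im + arg k := by
  have h : X * k = exp (log1 X + log k) := by rw [Complex.exp_add, exp_log1 hX, exp_log hk]
  rw [h, log1_exp] <;> simp [log_im, h0, h1]

lemma log1_neg_one_div_im {z : ℂ} (hz : 0 < z.im) : (log1 (-1 / z)).im = π - arg z := by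
  have hπ : arg z ≠ π := (arg_lt_pi_iff.2 (Or.inr hz.ne')).ne
  rw [log1, neg_div, neg_neg, one_div, add_im, log_im, arg_inv, if_neg hπ, mul_I_im, ofReal_re]
  ring

lemma log1_cpow1_neg_one_div_im {α : ℝ} (hα0 : 0 < α) (hα2 : α ≤ 2) {z : ℂ}
    (hz : 0 < z.im) :
    (log1 (cpow1 (-1 / z) α)).im = α * (π - arg z) := by
  have harg0 : 0 < arg z :=
    (arg_nonneg_iff.2 hz.le).lt_of_ne fun h => hz.ne' (arg_eq_zero_iff.1 h.symm).2
  have hargπ : arg z < π := arg_lt_pi_iff.2 (Or.inr hz.ne')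
  have him : ((α : ℂ) * log1 (-1 / z)).im = α * (π - arg z) := by
    simp [log1_neg_one_div_im hz]
  rw [cpow1_eq_exp_log1, log1_exp, him] <;> rw [him]
  · positivity
  · nlinarith

lemma arctan_lt_of_mul_abs_cos_lt_sin {η a : ℝ} (ha : 0 < a)
    (h : η * |Real.cos a| < Real.sin a) : Real.arctan η < a := by
  rcases lt_or_ge a (π / 2) with ha' | ha'
  · have hcos : 0 < Real.cos a := Real.cos_pos_of_mem_Ioo ⟨by linarith [pi_pos], ha'⟩
    have htan : η < Real.tan a := by
      rw [Real.tan_eq_sin_div_cos, lt_div_iff₀ hcos, ← abs_of_pos hcos]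
      exact h
    calc Real.arctan η < Real.arctan (Real.tan a) := Real.arctan_strictMono htan
      _ = a := Real.arctan_tan (by linarith [pi_pos]) ha'
  · exact (Real.arctan_lt_pi_div_two η).trans_le ha'

lemma arg_mem_Ioo_of_mul_abs_re_lt_im {η : ℝ} (hη : 0 ≤ η) {z : ℂ}
    (h : η * |z.re| < z.im) :
    arg z ∈ Ioo (Real.arctan η) (π - Real.arctan η) := by
  have hz : 0 < z.im := (by positivity : 0 ≤ η * |z.re|).trans_lt h
  have hz0 : z ≠ 0 := fun h0 => by simp [h0] at hz
  have hnorm : 0 < ‖z‖ := norm_pos_iff.2 hz0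
  have hcs : η * |Real.cos (arg z)| < Real.sin (arg z) := by
    rw [sin_arg, cos_arg hz0, abs_div, abs_of_pos hnorm, ← mul_div_assoc]
    exact div_lt_div_of_pos_right h hnorm
  have harg0 : 0 < arg z :=
    (arg_nonneg_iff.2 hz.le).lt_of_ne fun h0 => hz.ne' (arg_eq_zero_iff.1 h0.symm).2
  have hargπ : arg z < π := arg_lt_pi_iff.2 (Or.inr hz.ne')
  refine ⟨arctan_lt_of_mul_abs_cos_lt_sin harg0 hcs, ?_⟩
  have := arctan_lt_of_mul_abs_cos_lt_sin (sub_pos.2 hargπ)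
    (by rwa [Real.cos_pi_sub, Real.sin_pi_sub, abs_neg])
  linarith

lemma log1_cpow1_mul_im_lt {α θ : ℝ} (hα0 : 0 < α) (hα2 : α ≤ 2) {z : ℂ} (hz : 0 < z.im)
    (hzθ : arg z ∈ Ioo θ (π - θ)) {k : ℂ} (hk : k ≠ 0) (hkθ : |arg k| < α * θ) :
    (log1 (cpow1 (-1 / z) α * k)).im < 2 * π * α := by
  have hXim : (log1 (cpow1 (-1 / z) α)).im = α * (π - arg z) :=
    log1_cpow1_neg_one_div_im hα0 hα2 hz
  obtain ⟨hk₁, hk₂⟩ := abs_lt.1 hkθ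
  have h₁ : α * θ < α * (π - arg z) := by gcongr; linarith [hzθ.2]
  have h₂ : α * (π - arg z) < α * (π - θ) := by gcongr; linarith [hzθ.1]
  have h₃ : α * π ≤ 2 * π := by nlinarith [pi_pos]
  rw [log1_mul_im (cpow1_ne_zero _ _) hk] <;> rw [hXim] <;> nlinarith [pi_pos]

lemma cpow1_neg_one_div_one_div {α r : ℝ} (hα : 0 < α) (hr : 0 < r) {w : ℂ} (hw : w ≠ 0)
    (hw' : (log1 w).im < 2 * π * α) :
    cpow1 (-1 / (1 / (-(r : ℂ) ^ (1 / (α : ℂ)) * cpow1 w (1 / α)))) α = r * w := by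
  have hα' : (α : ℂ) ≠ 0 := ofReal_ne_zero.2 hα.ne'
  set v := (Real.log r + log1 w) / α with hv
  have hexp : -1 / (1 / (-(r : ℂ) ^ (1 / (α : ℂ)) * cpow1 w (1 / α))) = exp v := by
    rw [cpow1_eq_exp_log1, cpow_def_of_ne_zero (ofReal_ne_zero.2 hr.ne'), ← ofReal_log hr.le,
      neg_mul, ← Complex.exp_add, div_div_eq_mul_div, div_one, neg_mul_neg, one_mul, hv]
    congr 1
    ring
  have hvim : v.im = (log1 w).im / α := by
    simp [hv, div_ofReal_im]
  rw [hexp, cpow1_exp, hv, mul_div_cancel₀ _ hα', Complex.exp_add, exp_log1 hw,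
    ← ofReal_exp, Real.exp_log hr]
  · rw [hvim]
    exact div_pos (log1_im_pos w) hα
  · rw [hvim, div_lt_iff₀ hα]
    exact hw'

noncomputable def phi (s : ℂ) (r : ℝ) (X : ℂ) : ℂ := (1 - (1 - s * X) ^ ((1 / r : ℂ))) / s

lemma Gsr_eq (α : ℝ) (s : ℂ) (r : ℝ) (z : ℂ) :
    Gsr α s r z = -(r : ℂ) ^ (1 / (α : ℂ)) * cpow1 (phi s r (cpow1 (-1 / z) α)) (1 / α) :=
  rfl

lemma one_sub_mul_phi {s : ℂ} (hs : s ≠ 0) (r : ℝ) (X : ℂ) :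
    1 - s * phi s r X = (1 - s * X) ^ ((1 / r : ℂ)) := by
  rw [phi, mul_div_cancel₀ _ hs]
  ring

lemma phi_ofReal_mul_phi {s : ℂ} (hs : s ≠ 0) {u : ℝ} (hu : u ≠ 0) (r : ℝ) {X : ℂ}
    (h₁ : -π < (log (1 - u * s * X) * (1 / u)).im)
    (h₂ : (log (1 - u * s * X) * (1 / u)).im ≤ π) :
    phi s r (u * phi (u * s) u X) = u * phi (u * s) (u * r) X := by
  have hu' : (u : ℂ) ≠ 0 := ofReal_ne_zero.2 hu
  rw [phi, ← mul_assoc, mul_comm s, one_sub_mul_phi (mul_ne_zero hu' hs),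
    ← cpow_mul _ h₁ h₂, phi]
  push_cast
  field_simp

lemma tendsto_one_sub_one_sub_cpow_div (a c : ℂ) :
    Tendsto (fun X => (1 - (1 - a * X) ^ c) / X) (𝓝[≠] 0) (𝓝 (a * c)) := by
  have hderiv : HasDerivAt (fun X => (1 - a * X) ^ c) (c * 1 ^ (c - 1) * -a) 0 := by
    have h := ((hasDerivAt_id (0 : ℂ)).const_mul a).const_sub 1
    simpa using h.cpow_const (c := c) (by simp)
  have h := (hasDerivAt_iff_tendsto_slope.1 hderiv).neg
  rw [one_cpow, mul_one, mul_neg, neg_neg, mul_comm] at h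
  refine h.congr fun X => ?_
  simp only [slope_def_field, mul_zero, sub_zero, one_cpow]
  ring

lemma tendsto_phi_div {s : ℂ} (hs : s ≠ 0) (r : ℝ) :
    Tendsto (fun X => phi s r X / X) (𝓝[≠] 0) (𝓝 (1 / r)) := by
  have h := (tendsto_one_sub_one_sub_cpow_div s (1 / r)).div_const s
  rw [mul_div_cancel_left₀ _ hs] at h
  refine h.congr fun X => ?_
  rw [phi, div_div, div_div, mul_comm]

lemma eventually_phi_div_ne_zero_and_abs_arg_lt {s : ℂ} (hs : s ≠ 0) {r : ℝ} (hr : 0 < r)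
    {ε : ℝ} (hε : 0 < ε) :
    ∀ᶠ X in 𝓝[≠] 0, phi s r X / X ≠ 0 ∧ |arg (phi s r X / X)| < ε := by
  have hreal : (1 / r : ℂ) = ((1 / r : ℝ) : ℂ) := by push_cast; rfl
  have harg : Tendsto arg (𝓝 (1 / r : ℂ)) (𝓝 0) := by
    have h := (continuousAt_arg (hreal ▸ ofReal_mem_slitPlane.2 (by positivity))).tendsto
    rwa [hreal, arg_ofReal_of_nonneg (by positivity), ← hreal] at h
  have hne : ∀ᶠ y in 𝓝 (1 / r : ℂ), y ≠ 0 := isOpen_ne.mem_nhds (by simp [hr.ne'])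
  have habs : ∀ᶠ y in 𝓝 (1 / r : ℂ), |arg y| < ε := by
    simpa using harg.eventually (eventually_abs_sub_lt 0 hε)
  exact (tendsto_phi_div hs r).eventually (hne.and habs)

lemma eventually_abs_im_log_one_sub_mul_lt (a c : ℂ) :
    ∀ᶠ X in 𝓝 (0 : ℂ), |(log (1 - a * X) * c).im| < π := by
  have hcont : ContinuousAt (fun X => (log (1 - a * X) * c).im) 0 :=
    continuous_im.continuousAt.comp
      (((continuousAt_clog (by simp)).comp (by fun_prop)).mul continuousAt_const)
  simpa using hcont.eventually (eventually_abs_sub_lt _ pi_pos)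

lemma tendsto_cpow1_neg_one_div_cobounded {α : ℝ} (hα : 0 < α) :
    Tendsto (fun z => cpow1 (-1 / z) α) (Bornology.cobounded ℂ) (𝓝[≠] 0) := by
  refine tendsto_nhdsWithin_iff.2 ⟨?_, Eventually.of_forall fun z => cpow1_ne_zero _ _⟩
  have hnorm : ∀ z : ℂ, ‖cpow1 (-1 / z) α‖ = Real.exp (-α * Real.log ‖z‖) := by
    intro z
    simp [cpow1_eq_exp_log1, norm_exp, log1, neg_div, log_re]
  rw [tendsto_zero_iff_norm_tendsto_zero]
  simp_rw [hnorm]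
  exact Real.tendsto_exp_atBot.comp
    ((Real.tendsto_log_atTop.comp tendsto_norm_cobounded_atTop).const_mul_atTop_of_neg
      (neg_neg_of_pos hα))

lemma Fsr_comp_Fsr_eq_of {α r u : ℝ} (hα : 0 < α) (hr : 0 < r) (hu : 0 < u) {s : ℂ}
    (hs : s ≠ 0) {z : ℂ} (hw₁ : phi (u * s) u (cpow1 (-1 / z) α) ≠ 0)
    (hw₁' : (log1 (phi (u * s) u (cpow1 (-1 / z) α))).im < 2 * π * α)
    (hlog : |(log (1 - u * s * cpow1 (-1 / z) α) * (1 / u)).im| < π)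
    (hw₂ : phi (u * s) (u * r) (cpow1 (-1 / z) α) ≠ 0) :
    Fsr α s r (Fsr α (u * s) u z) = Fsr α (u * s) (u * r) z := by
  obtain ⟨h₁, h₂⟩ := abs_lt.1 hlog
  simp only [Fsr, Gsr_eq]
  rw [cpow1_neg_one_div_one_div hα hu hw₁ hw₁', phi_ofReal_mul_phi hs hu.ne' r h₁ h₂.le,
    cpow1_ofReal_mul hu hw₂, ofReal_mul, mul_cpow_ofReal_nonneg hu.le hr.le]
  ring

/-- for `α ∈ (0,2]`, `r, u > 0`, `s ≠ 0` and every opening `η > 0`,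
the composition law `F^α_{s,r} ∘ F^α_{us,u} = F^α_{us,ur}` holds on a truncated
cone `Γ_{η,M} = {z ∈ ℂ₊ : Im z > M, Im z > η|Re z|}` for `M` sufficiently large. -/
theorem stmt5 (α : ℝ) (hα0 : 0 < α) (hα2 : α ≤ 2)
    (r u : ℝ) (hr : 0 < r) (hu : 0 < u)
    (s : ℂ) (hs : s ≠ 0) (η : ℝ) (hη : 0 < η) :
    ∃ M > 0, ∀ z : ℂ, M < z.im → η * |z.re| < z.im →
      Fsr α s r (Fsr α (u * s) u z) = Fsr α (u * s) (u * r) z := by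
  have hθ : 0 < Real.arctan η := Real.arctan_pos.2 hη
  have hus : (u : ℂ) * s ≠ 0 := mul_ne_zero (ofReal_ne_zero.2 hu.ne') hs
  have hev := ((eventually_phi_div_ne_zero_and_abs_arg_lt hus hu (mul_pos hα0 hθ)).and
    ((eventually_abs_im_log_one_sub_mul_lt (u * s) (1 / u)).filter_mono nhdsWithin_le_nhds)).and
    (eventually_phi_div_ne_zero_and_abs_arg_lt hus (mul_pos hu hr) one_pos)
  obtain ⟨R, -, hR⟩ := (Metric.hasBasis_cobounded_compl_closedBall 0).eventually_iff.1
    ((tendsto_cpow1_neg_one_div_cobounded hα0).eventually hev)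
  refine ⟨max R 1, by positivity, fun z hzM hzη => ?_⟩
  have hz : 0 < z.im := by linarith [le_max_right R 1]
  obtain ⟨⟨⟨hk, hkθ⟩, hlog⟩, hw₂, -⟩ := hR (show z ∈ (Metric.closedBall 0 R)ᶜ by
    simp only [mem_compl_iff, Metric.mem_closedBall, dist_zero_right, not_le]
    linarith [abs_im_le_norm z, le_max_left R 1, le_abs_self z.im])
  have hw₁ : phi (u * s) u (cpow1 (-1 / z) α) =
      cpow1 (-1 / z) α * (phi (u * s) u (cpow1 (-1 / z) α) / cpow1 (-1 / z) α) :=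
    (mul_div_cancel₀ _ (cpow1_ne_zero _ _)).symm
  refine Fsr_comp_Fsr_eq_of hα0 hr hu hs ?_ ?_ hlog (div_ne_zero_iff.1 hw₂).1 <;> rw [hw₁]
  · exact mul_ne_zero (cpow1_ne_zero _ _) hk
  · exact log1_cpow1_mul_im_lt hα0 hα2 hz (arg_mem_Ioo_of_mul_abs_re_lt_im hη.le hzη) hk hkθ
end

section
/- Let θ ∈ (0, π), θ ≠ π/2, and s = e^{iθ}. Define φ(z) = (-3sz² - s²z)/(3z² + 3zs + s²). Then there exists x₀ ∈ ℝ such that lim_{y→0⁺} Im φ(x₀ + iy) > 0. -/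
open Real Complex Filter

/-!
For real `x` and `s = c + i t`, `Im φ(x) = -(9x⁴t + 6x³ct) / |3x² + 3xs + s²|²`. At
`x₀ = -c/3` the numerator is `c⁴t/9 > 0` and `Im(3x₀² + 3x₀s + s²) = ct ≠ 0`, so `φ` is
continuous at `x₀` and the boundary value of `Im φ` there is `Im φ(x₀) > 0`.
-/

lemma Real.cos_ne_zero_of_ne_pi_div_two {θ : ℝ} (hθ0 : 0 < θ) (hθπ : θ < π) (hθ : θ ≠ π / 2) :
    Real.cos θ ≠ 0 := fun h =>
  hθ <| injOn_cos ⟨hθ0.le, hθπ.le⟩ ⟨by positivity, by linarith [pi_pos]⟩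
    (h.trans cos_pi_div_two.symm)

lemma tendsto_im_vertical_of_continuousAt {f : ℂ → ℂ} {x₀ : ℝ} (hf : ContinuousAt f x₀) :
    Tendsto (fun y : ℝ => (f (x₀ + y * I)).im) (nhdsWithin 0 (Set.Ioi 0)) (nhds (f x₀).im) := by
  have hline : Tendsto (fun y : ℝ => (x₀ : ℂ) + y * I) (nhds 0) (nhds (x₀ : ℂ)) := by
    simpa using (Continuous.tendsto (by fun_prop) 0 : Tendsto (fun y : ℝ => (x₀ : ℂ) + y * I) _ _)
  exact (continuous_im.tendsto _ |>.comp (hf.tendsto.comp hline)).mono_left nhdsWithin_le_nhds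

lemma im_div_ofReal (s : ℂ) (x : ℝ) :
    ((-3 * s * x ^ 2 - s ^ 2 * x) / (3 * x ^ 2 + 3 * x * s + s ^ 2)).im =
      -(9 * x ^ 4 * s.im + 6 * x ^ 3 * s.re * s.im) / normSq (3 * x ^ 2 + 3 * x * s + s ^ 2) := by
  rw [div_im, ← sub_div]
  congr 1
  simp only [neg_mul, pow_succ, pow_zero, one_mul, sub_im, neg_im, mul_im, mul_re, re_ofNat,
    im_ofNat, zero_mul, sub_zero, ofReal_re, ofReal_im, mul_zero, add_zero, zero_add, add_re, sub_re,
    neg_re, add_im, neg_add_rev]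
  ring

section

variable {s : ℂ} (hre : s.re ≠ 0)
include hre

lemma denom_ne_zero_at_neg_re_div_three (him : s.im ≠ 0) :
    3 * ((-s.re / 3 : ℝ) : ℂ) ^ 2 + 3 * ((-s.re / 3 : ℝ) : ℂ) * s + s ^ 2 ≠ 0 := by
  intro h
  have him_eq := congrArg Complex.im h
  simp only [ofReal_div, ofReal_neg, ofReal_ofNat, pow_two, add_im, mul_im, re_ofNat, div_ofNat_re,
    neg_re, ofReal_re, div_ofNat_im, neg_im, ofReal_im, neg_zero, zero_div, mul_zero, zero_mul,
    add_zero, im_ofNat, mul_re, sub_zero, zero_add, zero_im] at him_eq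
  exact mul_ne_zero hre him (by linarith)

lemma im_div_pos_at_neg_re_div_three (him : 0 < s.im) :
    0 < ((-3 * s * ((-s.re / 3 : ℝ) : ℂ) ^ 2 - s ^ 2 * ((-s.re / 3 : ℝ) : ℂ)) /
      (3 * ((-s.re / 3 : ℝ) : ℂ) ^ 2 + 3 * ((-s.re / 3 : ℝ) : ℂ) * s + s ^ 2)).im := by
  rw [im_div_ofReal]
  refine div_pos ?_ (normSq_pos.mpr (denom_ne_zero_at_neg_re_div_three hre him.ne'))
  have hnum : -(9 * (-s.re / 3) ^ 4 * s.im + 6 * (-s.re / 3) ^ 3 * s.re * s.im) =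
      s.re ^ 4 * s.im / 9 := by
    ring
  rw [hnum]
  positivity

end

/-- for `θ ∈ (0,π)`, `θ ≠ π/2`, `s = e^{iθ}` and
`φ(z) = (-3sz² - s²z)/(3z² + 3zs + s²)`, there is a real point `x₀` at which the
boundary value of `Im φ` from the upper half-plane is strictly positive. -/
theorem stmt9 (θ : ℝ) (hθ0 : 0 < θ) (hθπ : θ < π) (hθ : θ ≠ π / 2)
    (s : ℂ) (hs : s = Complex.exp (θ * Complex.I))
    (φ : ℂ → ℂ)
    (hφ : ∀ z : ℂ, φ z =
      (-3 * s * z ^ 2 - s ^ 2 * z) / (3 * z ^ 2 + 3 * z * s + s ^ 2)) :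
    ∃ x₀ : ℝ, ∃ L : ℝ, 0 < L ∧
      Tendsto (fun y : ℝ => (φ (x₀ + y * Complex.I)).im)
        (nhdsWithin 0 (Set.Ioi 0)) (nhds L) := by
  have hre : s.re ≠ 0 := by
    rw [hs, exp_ofReal_mul_I_re]
    exact Real.cos_ne_zero_of_ne_pi_div_two hθ0 hθπ hθ
  have him : 0 < s.im := by
    rw [hs, exp_ofReal_mul_I_im]
    exact sin_pos_of_pos_of_lt_pi hθ0 hθπ
  refine ⟨-s.re / 3, _, by rw [hφ]; exact im_div_pos_at_neg_re_div_three hre him,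
    tendsto_im_vertical_of_continuousAt ?_⟩
  rw [funext hφ]
  exact ContinuousAt.div (by fun_prop) (by fun_prop)
    (denom_ne_zero_at_neg_re_div_three hre him.ne')
end

section
/- Let s = -1 (so θ = π) and φ(z) = (3z² - z)/(3z² - 3z + 1). Then Im φ(x + iy) = -y(6y² + 6(x - 1/2)² - 1/2)/|3z² - 3z + 1|² for z = x+iy, and consequently φ takes a value with positive imaginary part at some point of the upper half-plane. -/
open Complex ComplexConjugate

theorem Complex.im_div_eq_im_mul_conj_div (p q : ℂ) :
    (p / q).im = (p * conj q).im / ‖q‖ ^ 2 := by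
  rw [div_im, Complex.sq_norm, mul_im, conj_re, conj_im]
  ring

theorem Complex.im_div_pos_of_im_mul_conj_pos {p q : ℂ} (h : 0 < (p * conj q).im) :
    0 < (p / q).im := by
  have hq : q ≠ 0 := by
    rintro rfl
    simp at h
  rw [im_div_eq_im_mul_conj_div]
  exact div_pos h (pow_pos (norm_pos_iff.mpr hq) 2)

theorem im_numerator_mul_conj_denominator (x y : ℝ) :
    ((3 * (x + y * I) ^ 2 - (x + y * I)) * conj (3 * (x + y * I) ^ 2 - 3 * (x + y * I) + 1)).im =
      -(y * (6 * y ^ 2 + 6 * (x - 1/2) ^ 2 - 1/2)) := by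
  simp only [map_add, map_sub, map_mul, map_one, map_ofNat, conj_ofReal, conj_I,
    mul_im, mul_re, add_re, add_im, sub_re, sub_im, pow_two, ofReal_re, ofReal_im, I_re, I_im,
    neg_re, neg_im, one_re, one_im, re_ofNat, im_ofNat]
  ring

/-- for `φ(z) = (3z² - z)/(3z² - 3z + 1)` (the case `s = -1`),
`Im φ(x+iy) = -y(6y² + 6(x-1/2)² - 1/2)/|3z² - 3z + 1|²`, and consequently `φ`
takes a value with positive imaginary part at some point of the upper half-plane. -/
theorem stmt10 (φ : ℂ → ℂ)
    (hφ : ∀ z : ℂ, φ z = (3 * z ^ 2 - z) / (3 * z ^ 2 - 3 * z + 1)) :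
    (∀ x y : ℝ, 3 * (x + y * Complex.I) ^ 2 - 3 * (x + y * Complex.I) + 1 ≠ 0 →
      (φ (x + y * Complex.I)).im =
        -(y * (6 * y ^ 2 + 6 * (x - 1/2) ^ 2 - 1/2)) /
          (‖3 * (x + y * Complex.I) ^ 2 - 3 * (x + y * Complex.I) + 1‖) ^ 2)
    ∧ ∃ z : ℂ, 0 < z.im ∧ 0 < (φ z).im := by
  refine ⟨fun x y _ => ?_, ((1/2 : ℝ) : ℂ) + ((1/10 : ℝ) : ℂ) * I, by simp, ?_⟩
  · rw [hφ, im_div_eq_im_mul_conj_div, im_numerator_mul_conj_denominator]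
  -- `1/2 + i/10` lies in the disk `6y² + 6(x - 1/2)² < 1/2`, where the numerator is positive.
  · rw [hφ]
    apply im_div_pos_of_im_mul_conj_pos
    rw [im_numerator_mul_conj_denominator]
    norm_num
end

section
/- Let r > 2 be real. Then the function z ↦ 1 - (1 - 1/(rz))^r (with the principal branch of the power on ℂ∖(-∞,0]) has a zero in the open upper half-plane ℂ₊. -/
open Complex

/-!
Put `w = exp (2πi / r)`. Since `r > 2`, the angle `2π / r` lies in `(0, π)`, so it is the principal
argument of `w`; hence `w ^ r = exp (2πi) = 1` for the principal power, and `Im w > 0`. Solving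
`1 - 1 / (r z) = w` gives `z = 1 / (r (1 - w))`, whose imaginary part is `Im w / (r |1 - w|²) > 0`.
-/

theorem Complex.exp_cpow_of_im_mem_Ioc {x : ℂ} (hx : x.im ∈ Set.Ioc (-Real.pi) Real.pi) (y : ℂ) :
    exp x ^ y = exp (x * y) := by
  rw [cpow_def_of_ne_zero (exp_ne_zero x), log_exp hx.1 hx.2]

theorem Complex.one_sub_one_div_mul_inv_mul_one_sub {c : ℂ} (hc : c ≠ 0) (w : ℂ) :
    1 - 1 / (c * (c * (1 - w))⁻¹) = w := by
  rw [mul_inv, ← mul_assoc, mul_inv_cancel₀ hc, one_mul, one_div, inv_inv, sub_sub_cancel]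

theorem Complex.im_inv_ofReal_mul_one_sub_pos {r : ℝ} (hr : 0 < r) {w : ℂ} (hw : 0 < w.im) :
    0 < ((r : ℂ) * (1 - w))⁻¹.im := by
  have him : ((r : ℂ) * (1 - w)).im = -(r * w.im) := by simp
  have hne : (r : ℂ) * (1 - w) ≠ 0 := fun h => by
    have := congrArg Complex.im h
    rw [him, zero_im] at this
    nlinarith
  rw [inv_im, him, neg_neg]
  have := normSq_pos.mpr hne
  positivity

/-- for real `r > 2`, the function `z ↦ 1 - (1 - 1/(rz))^r`
(principal branch of the complex power) has a zero in the open upper half-plane. -/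
theorem stmt11 (r : ℝ) (hr : 2 < r) :
    ∃ z : ℂ, 0 < z.im ∧ 1 - (1 - 1 / ((r : ℂ) * z)) ^ ((r : ℂ)) = 0 := by
  have hr0 : 0 < r := by linarith
  have hrC : (r : ℂ) ≠ 0 := ofReal_ne_zero.mpr hr0.ne'
  have hθ : 2 * Real.pi / r ∈ Set.Ioo 0 Real.pi :=
    ⟨by positivity, by rw [div_lt_iff₀ hr0]; nlinarith [Real.pi_pos]⟩
  set w := exp ((2 * Real.pi / r : ℝ) * I)
  have hw_im : 0 < w.im := by
    rw [exp_ofReal_mul_I_im]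
    exact Real.sin_pos_of_pos_of_lt_pi hθ.1 hθ.2
  have hw_pow : w ^ (r : ℂ) = 1 := by
    rw [exp_cpow_of_im_mem_Ioc (by simpa using ⟨by linarith [hθ.1, Real.pi_pos], hθ.2.le⟩)]
    convert exp_two_pi_mul_I using 2
    push_cast
    field_simp
  refine ⟨((r : ℂ) * (1 - w))⁻¹, im_inv_ofReal_mul_one_sub_pos hr0 hw_im, ?_⟩
  rw [one_sub_one_div_mul_inv_mul_one_sub hrC, hw_pow, sub_self]
end

section
/- Let 1 < r ≤ 2. Then the function H(z) = (1 - (1 - 1/(rz))^r)^{-1} (principal branch) is well-defined, analytic, and injective on the open upper half-plane ℂ₊. -/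
/-! The Möbius map `z ↦ 1 - 1/(rz)` sends the upper half-plane injectively into itself, where
`0 < arg w < π`. For `0 < r ≤ 2` the imaginary part `r · arg w` of `r log w` then stays in
the window `[0, 2π)`, on which `exp` is injective, so `w ↦ w ^ r` is injective on the upper
half-plane together with the point `1`. This gives both `w ^ r ≠ 1` (the denominator of `H`
never vanishes) and the injectivity of `H`; analyticity holds because `w` avoids the branch
cut of `log`. -/

open Complex Real Set

namespace Complex

theorem exp_injOn_im_mem_Ico (a : ℝ) : InjOn exp {ζ : ℂ | ζ.im ∈ Ico a (a + 2 * π)} := by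
  intro x ⟨hxa, hxb⟩ y ⟨hya, hyb⟩ h
  obtain ⟨n, hn⟩ := exp_eq_exp_iff_exists_int.1 h
  have him : x.im = y.im + n * (2 * π) := by simpa using congrArg im hn
  have hn0 : n = 0 := by
    have hlt : (n : ℝ) < 1 := by nlinarith [pi_pos]
    have hgt : (-1 : ℝ) < n := by nlinarith [pi_pos]
    have : n < 1 := by exact_mod_cast hlt
    have : -1 < n := by exact_mod_cast hgt
    omega
  simpa [hn0] using hn

theorem cpow_ofReal_injOn {r : ℝ} (hr : r ≠ 0) :
    InjOn (fun w : ℂ => w ^ (r : ℂ)) {w | w ≠ 0 ∧ r * arg w ∈ Ico 0 (2 * π)} := by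
  intro w₁ ⟨hw₁, harg₁⟩ w₂ ⟨hw₂, harg₂⟩ h
  have him : ∀ w : ℂ, (log w * r).im = r * arg w := fun w => by simp [log_im, mul_comm]
  simp only [cpow_def_of_ne_zero hw₁, cpow_def_of_ne_zero hw₂] at h
  have hlog :=
    exp_injOn_im_mem_Ico 0 (by simpa [him] using harg₁) (by simpa [him] using harg₂) h
  rw [← exp_log hw₁, ← exp_log hw₂, mul_right_cancel₀ (ofReal_ne_zero.2 hr) hlog]

theorem ne_zero_and_mul_arg_mem_Ico_of_im_pos {r : ℝ} (hr0 : 0 < r) (hr2 : r ≤ 2) {w : ℂ}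
    (hw : 0 < w.im) : w ≠ 0 ∧ r * arg w ∈ Ico 0 (2 * π) := by
  have hpos : 0 ≤ arg w := arg_nonneg_iff.2 hw.le
  have hlt : arg w < π := arg_lt_pi_iff.2 (Or.inr hw.ne')
  exact ⟨fun h => by simp [h] at hw, by positivity, by nlinarith⟩

theorem cpow_ofReal_ne_one_of_im_pos {r : ℝ} (hr0 : 0 < r) (hr2 : r ≤ 2) {w : ℂ}
    (hw : 0 < w.im) : w ^ (r : ℂ) ≠ 1 := by
  intro h
  have h1 : (1 : ℂ) ∈ {w : ℂ | w ≠ 0 ∧ r * arg w ∈ Ico 0 (2 * π)} := by simp [pi_pos]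
  have := cpow_ofReal_injOn hr0.ne' (ne_zero_and_mul_arg_mem_Ico_of_im_pos hr0 hr2 hw) h1
    (by simpa using h)
  simp [this] at hw

theorem im_one_sub_one_div_pos {w : ℂ} (hw : 0 < w.im) : 0 < (1 - 1 / w).im := by
  have hw0 : w ≠ 0 := fun h => by simp [h] at hw
  rw [sub_im, one_im, one_div, inv_im, neg_div, sub_neg_eq_add, zero_add]
  exact div_pos hw (normSq_pos.2 hw0)

end Complex

/-- for real `1 < r ≤ 2`, the function
`H(z) = (1 - (1 - 1/(rz))^r)⁻¹` (principal branch) is well defined (nonvanishing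
denominator), analytic and injective on the open upper half-plane. -/
theorem stmt12 (r : ℝ) (hr1 : 1 < r) (hr2 : r ≤ 2)
    (H : ℂ → ℂ)
    (hH : ∀ z : ℂ, H z = (1 - (1 - 1 / ((r : ℂ) * z)) ^ ((r : ℂ)))⁻¹) :
    (∀ z : ℂ, 0 < z.im → 1 - (1 - 1 / ((r : ℂ) * z)) ^ ((r : ℂ)) ≠ 0) ∧
    AnalyticOn ℂ H {z : ℂ | 0 < z.im} ∧
    Set.InjOn H {z : ℂ | 0 < z.im} := by
  have hr0 : 0 < r := by linarith
  have hw : ∀ z : ℂ, 0 < z.im → 0 < (1 - 1 / ((r : ℂ) * z)).im := fun z hz =>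
    im_one_sub_one_div_pos (by simpa using mul_pos hr0 hz)
  have hne : ∀ z : ℂ, 0 < z.im → 1 - (1 - 1 / ((r : ℂ) * z)) ^ ((r : ℂ)) ≠ 0 :=
    fun z hz => sub_ne_zero.2 (cpow_ofReal_ne_one_of_im_pos hr0 hr2 (hw z hz)).symm
  refine ⟨hne, ?_, ?_⟩
  · rw [funext hH]
    refine (DifferentiableOn.analyticOnNhd (fun z hz => ?_) (isOpen_im_gt 0)).analyticOn
    have hrz : (r : ℂ) * z ≠ 0 :=
      mul_ne_zero (ofReal_ne_zero.2 hr0.ne') fun h => by simp [h] at hz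
    have hslit : 1 - 1 / ((r : ℂ) * z) ∈ slitPlane := mem_slitPlane_iff.2 (Or.inr (hw z hz).ne')
    have hφ : DifferentiableAt ℂ (fun z : ℂ => 1 - 1 / ((r : ℂ) * z)) z :=
      (differentiableAt_const 1).sub
        ((differentiableAt_const 1).div ((differentiableAt_const _).mul differentiableAt_id) hrz)
    exact ((hφ.cpow (differentiableAt_const _) hslit).const_sub 1 |>.inv (hne z hz))
      |>.differentiableWithinAt
  · intro z₁ hz₁ z₂ hz₂ h
    rw [hH, hH, inv_inj, sub_right_inj] at h
    have hφ := cpow_ofReal_injOn hr0.ne'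
      (ne_zero_and_mul_arg_mem_Ico_of_im_pos hr0 hr2 (hw z₁ hz₁))
      (ne_zero_and_mul_arg_mem_Ico_of_im_pos hr0 hr2 (hw z₂ hz₂)) h
    rw [sub_right_inj, one_div, one_div, inv_inj] at hφ
    exact mul_left_cancel₀ (ofReal_ne_zero.2 hr0.ne') hφ
end

section
/- Let μ be a probability measure on ℝ such that F_μ(z) = 1/∫ℝ (z - x)^{-1} dμ(x) is univalent (injective and analytic) on ℂ₊ and F_μ^{-1} extends from F_μ(ℂ₊) to an analytic univalent function on all of ℂ₊. Then φ_μ(z) := F_μ^{-1}(z) - z maps ℂ₊ into ℂ₋ ∪ ℝ. -/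
/-!
For `w ∈ ℂ₊` write `G(w) = ∫ (w - x)⁻¹ dμ(x)`. Pointwise `Im (w - x)⁻¹ = -Im w · |w - x|⁻²`, so
`Im G(w) = -Im w · ∫ |w - x|⁻² dμ`, while Jensen gives `|G(w)|² ≤ ∫ |w - x|⁻² dμ`; together these
yield `Im F_μ(w) = -Im G(w) / |G(w)|² ≥ Im w`.

If `Im Finv z > Im z` for some `z ∈ ℂ₊`, then `w := Finv z` lies in `ℂ₊`, hence so does `F w`, and
`Finv (F w) = w = Finv z`; injectivity of `Finv` gives `F w = z`, so `Im z = Im F w ≥ Im w > Im z`.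
-/

open Complex MeasureTheory

theorem sq_norm_integral_le_integral_sq_norm {α E : Type*} [MeasurableSpace α]
    [NormedAddCommGroup E] [NormedSpace ℝ E] [CompleteSpace E] {μ : Measure α}
    [IsProbabilityMeasure μ] {f : α → E} (hf : Integrable f μ)
    (hf2 : Integrable (fun x => ‖f x‖ ^ 2) μ) :
    ‖∫ x, f x ∂μ‖ ^ 2 ≤ ∫ x, ‖f x‖ ^ 2 ∂μ :=
  ((convexOn_norm convex_univ).pow (fun _ _ => norm_nonneg _) 2).map_integral_le
    (continuous_norm.pow 2).continuousOn isClosed_univ (.of_forall fun _ => trivial) hf hf2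

section CauchyTransform

variable (μ : Measure ℝ) {w : ℂ}

theorem sub_ofReal_ne_zero (hw : 0 < w.im) (x : ℝ) : w - x ≠ 0 :=
  sub_ne_zero.2 fun h => by simp [h] at hw

theorem norm_inv_sub_ofReal_le (hw : 0 < w.im) (x : ℝ) : ‖(w - x)⁻¹‖ ≤ w.im⁻¹ := by
  rw [norm_inv]
  refine inv_anti₀ hw ?_
  simpa using (le_abs_self _).trans (abs_im_le_norm (w - x))

theorem im_inv_sub_ofReal (x : ℝ) : ((w - x)⁻¹).im = -w.im * ‖(w - x)⁻¹‖ ^ 2 := by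
  rw [inv_im, norm_inv, inv_pow, Complex.sq_norm, sub_im, ofReal_im, sub_zero, div_eq_mul_inv,
    neg_mul]

theorem integrable_inv_sub_ofReal [IsFiniteMeasure μ] (hw : 0 < w.im) :
    Integrable (fun x : ℝ => (w - x)⁻¹) μ :=
  .of_bound ((continuous_const.sub continuous_ofReal).inv₀
      (sub_ofReal_ne_zero hw)).aestronglyMeasurable
    _ (.of_forall (norm_inv_sub_ofReal_le hw))

theorem integrable_sq_norm_inv_sub_ofReal [IsFiniteMeasure μ] (hw : 0 < w.im) :
    Integrable (fun x : ℝ => ‖(w - x)⁻¹‖ ^ 2) μ :=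
  (MemLp.of_bound (integrable_inv_sub_ofReal μ hw).aestronglyMeasurable _
    (.of_forall (norm_inv_sub_ofReal_le hw))).integrable_norm_pow two_ne_zero

theorem im_integral_inv_sub_ofReal [IsFiniteMeasure μ] (hw : 0 < w.im) :
    (∫ x : ℝ, (w - x)⁻¹ ∂μ).im = -w.im * ∫ x : ℝ, ‖(w - x)⁻¹‖ ^ 2 ∂μ := by
  calc _ = ∫ x : ℝ, ((w - x)⁻¹).im ∂μ :=
        (integral_im (𝕜 := ℂ) (integrable_inv_sub_ofReal μ hw)).symm
    _ = _ := by simp only [im_inv_sub_ofReal, integral_const_mul]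

theorem integral_sq_norm_inv_sub_ofReal_pos [IsProbabilityMeasure μ] (hw : 0 < w.im) :
    0 < ∫ x : ℝ, ‖(w - x)⁻¹‖ ^ 2 ∂μ := by
  rw [integral_pos_iff_support_of_nonneg (fun _ => sq_nonneg _)
    (integrable_sq_norm_inv_sub_ofReal μ hw)]
  have hsupp : Function.support (fun x : ℝ => ‖(w - x)⁻¹‖ ^ 2) = Set.univ :=
    Set.eq_univ_of_forall fun x => by simp [sub_ofReal_ne_zero hw x]
  rw [hsupp, measure_univ]
  exact one_pos

theorem im_le_im_inv_integral_inv_sub_ofReal [IsProbabilityMeasure μ] (hw : 0 < w.im) :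
    w.im ≤ ((∫ x : ℝ, (w - x)⁻¹ ∂μ)⁻¹).im := by
  set G := ∫ x : ℝ, (w - x)⁻¹ ∂μ
  set I := ∫ x : ℝ, ‖(w - x)⁻¹‖ ^ 2 ∂μ
  have hG_im : G.im = -w.im * I := im_integral_inv_sub_ofReal μ hw
  have hI_pos : 0 < I := integral_sq_norm_inv_sub_ofReal_pos μ hw
  have hG_le : normSq G ≤ I := by
    rw [← Complex.sq_norm]
    exact sq_norm_integral_le_integral_sq_norm (integrable_inv_sub_ofReal μ hw)
      (integrable_sq_norm_inv_sub_ofReal μ hw)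
  have hG_pos : 0 < normSq G := normSq_pos.2 fun h => by
    rw [h, zero_im] at hG_im
    nlinarith
  rw [inv_im, hG_im, neg_mul, neg_neg, le_div_iff₀ hG_pos]
  exact mul_le_mul_of_nonneg_left hG_le hw.le

end CauchyTransform

theorem stmt13_general (μ : Measure ℝ) [IsProbabilityMeasure μ]
    (F : ℂ → ℂ)
    (hF : ∀ z : ℂ, 0 < z.im → F z = (∫ x : ℝ, (z - (x : ℂ))⁻¹ ∂μ)⁻¹)
    (Finv : ℂ → ℂ)
    (hFinvInj : Set.InjOn Finv {z : ℂ | 0 < z.im})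
    (hext : ∀ z : ℂ, 0 < z.im → Finv (F z) = z) :
    ∀ z : ℂ, 0 < z.im → (Finv z - z).im ≤ 0 := by
  intro z hz
  by_contra! hlt
  rw [sub_im, sub_pos] at hlt
  set w := Finv z
  have hw : 0 < w.im := hz.trans hlt
  have hFw : w.im ≤ (F w).im := hF w hw ▸ im_le_im_inv_integral_inv_sub_ofReal μ hw
  have hFw_eq : F w = z := hFinvInj (hw.trans_le hFw) hz (hext w hw)
  exact (hlt.trans_le (hFw_eq ▸ hFw)).false

/-- if the reciprocal Cauchy transform `F_μ` of a probability
measure `μ` on `ℝ` is univalent on `ℂ₊` and its inverse extends from `F_μ(ℂ₊)`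
to an analytic univalent function `Finv` on all of `ℂ₊`, then
`φ_μ(z) = Finv(z) - z` maps `ℂ₊` into `ℂ₋ ∪ ℝ` (so `μ` is freely infinitely
divisible, i.e. `μ` belongs to the class `UI`). -/
theorem stmt13 (μ : Measure ℝ) [IsProbabilityMeasure μ]
    (F : ℂ → ℂ)
    (hF : ∀ z : ℂ, 0 < z.im → F z = (∫ x : ℝ, (z - (x : ℂ))⁻¹ ∂μ)⁻¹)
    (hFanal : AnalyticOn ℂ F {z : ℂ | 0 < z.im})
    (hFinj : Set.InjOn F {z : ℂ | 0 < z.im})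
    (Finv : ℂ → ℂ)
    (hFinvAnal : AnalyticOn ℂ Finv {z : ℂ | 0 < z.im})
    (hFinvInj : Set.InjOn Finv {z : ℂ | 0 < z.im})
    (hext : ∀ z : ℂ, 0 < z.im → Finv (F z) = z) :
    ∀ z : ℂ, 0 < z.im → (Finv z - z).im ≤ 0 :=
  stmt13_general μ F hF Finv hFinvInj hext
end

section
/- Let φ₁(z) = 1/(z-1) and φ₂(z) = 1/(z+1), and let φ(z) = φ₁(z) + φ₂(z) = 2z/(z²-1). Then the function z ↦ z + 2z/(z²-1) is not injective on the upper half-plane ℂ₊. -/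
/-!
On the imaginary axis the map is real-valued up to the factor `I`:
`f(yI) = g(y) I` with `g(y) = y (y² - 1) / (y² + 1)`, and
`g(a) - g(b)` has the factor `a²b² + (a + b)² - 1`. The curve `a²b² + (a + b)² = 1`
meets the open positive quadrant off the diagonal, e.g. at `a = 1/2`, `b = (√19 - 2)/5`.
-/

open Complex

lemma add_two_mul_div_sq_sub_one_ofReal_mul_I (y : ℝ) :
    (y * I : ℂ) + 2 * (y * I) / ((y * I) ^ 2 - 1) = ((y * (y ^ 2 - 1) / (y ^ 2 + 1) : ℝ) : ℂ) * I := by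
  have hpos : (y ^ 2 + 1 : ℂ) ≠ 0 := by exact_mod_cast (by positivity : y ^ 2 + 1 ≠ 0)
  have hden : (y * I : ℂ) ^ 2 - 1 = -(y ^ 2 + 1) := by rw [mul_pow, I_sq]; ring
  rw [hden]
  push_cast
  field_simp
  ring

lemma mul_sq_sub_one_div_sq_add_one_eq {a b : ℝ} (h : a ^ 2 * b ^ 2 + (a + b) ^ 2 = 1) :
    a * (a ^ 2 - 1) / (a ^ 2 + 1) = b * (b ^ 2 - 1) / (b ^ 2 + 1) := by
  rw [div_eq_div_iff (by positivity) (by positivity)]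
  linear_combination (a - b) * h

/-- the function `z ↦ z + 2z/(z² - 1)` (which is
`F⁻¹ = z + φ₁ + φ₂` for `φ₁(z) = 1/(z-1)`, `φ₂(z) = 1/(z+1)`) is not injective
on the upper half-plane; hence the class `UI` is not closed under free
convolution. -/
theorem stmt15 :
    ¬ Set.InjOn (fun z : ℂ => z + 2 * z / (z ^ 2 - 1)) {z : ℂ | 0 < z.im} := by
  set b : ℝ := (√19 - 2) / 5
  have hsqrt : √19 ^ 2 = 19 := Real.sq_sqrt (by norm_num)
  have hb_root : 5 * b ^ 2 + 4 * b - 3 = 0 := by simp only [b]; nlinarith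
  have hb_pos : 0 < b := by simp only [b]; nlinarith [Real.sqrt_nonneg 19]
  have hb_ne : b ≠ 1 / 2 := by rintro hb; rw [hb] at hb_root; norm_num at hb_root
  have hcurve : (1 / 2 : ℝ) ^ 2 * b ^ 2 + (1 / 2 + b) ^ 2 = 1 := by linear_combination hb_root / 4
  intro hinj
  have heq := @hinj ((1 / 2 : ℝ) * I) (by simp) (b * I) (by simpa using hb_pos)
  simp only [add_two_mul_div_sq_sub_one_ofReal_mul_I, mul_sq_sub_one_div_sq_add_one_eq hcurve,
    true_imp_iff, mul_left_inj' I_ne_zero, ofReal_inj] at heq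
  exact hb_ne heq.symm
end

section
/- Let 0 < α ≤ 2 and s ∈ ℂ∖{0} with arg s ∈ [(1-α)π, π] when α ≤ 1, or arg s ∈ [0, (2-α)π] when α > 1 (admissibility). Then the function z ↦ (1 - (1 - s(-1/z)^α)^{1/r})/s, defined on ℂ₊ with branches (-1/z)^α = e^{α log z'} where log has imaginary part in (0,2π) applied to -1/z, and w^{1/r} principal with r ≥ 1, maps ℂ₊ into the open sector {w ∈ ℂ∖{0} : 0 < arg w < απ}. -/
/-!
Put `u = -1/z`, which lies in the upper half-plane. There `cpow1` is the principal power, so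
`x = s u^α` has argument (taken in `(0, 2π]`) `φ = arg s + α arg u`, and admissibility places `φ`
strictly between `arg s` and `arg s + απ`, two angles on either side of `π`. For `0 < ρ ≤ 1` the map
`x ↦ 1 - (1 - x)^ρ` moves `x` towards the negative real axis without crossing it; for `x` in the
upper half-plane this is `arg x ≤ arg (1 - (1 - x)^ρ)`, which says that the logarithmic spiral
`t ↦ (1 - x)^t`, `t ∈ [0, 1]`, lies on one side of its chord, and is proved by writing both
`(1 - x)^ρ - 1` and `-x` as integrals of `e^{ct}` with `c = log (1 - x)`. So the argument of
`1 - (1 - x)^ρ` stays in `(arg s, arg s + απ)`, and dividing by `s` moves it into `(0, απ)`.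
-/

open Real Complex

/-- The argument of `z` taken in `(0, 2π]`: `arg₁ z = arg(-z) + π`. -/
noncomputable def arg1 (z : ℂ) : ℝ := Complex.arg (-z) + Real.pi

open Set
open scoped ComplexConjugate

lemma arg_pos_of_im_pos {x : ℂ} (hx : 0 < x.im) : 0 < arg x :=
  (arg_nonneg_iff.2 hx.le).lt_of_ne fun h ↦ hx.ne' (arg_eq_zero_iff.1 h.symm).2

lemma arg_le_arg_of_im_mul_conj_nonneg {x y : ℂ} (hx : x ≠ 0) (hy : y ≠ 0)
    (hxy : arg x - arg y < π) (h : 0 ≤ (y * conj x).im) : arg x ≤ arg y := by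
  have him : (y * conj x).im = ‖y‖ * ‖x‖ * Real.sin (arg y - arg x) := by
    rw [Real.sin_sub, mul_im, conj_re, conj_im, ← norm_mul_cos_arg x, ← norm_mul_sin_arg x,
      ← norm_mul_cos_arg y, ← norm_mul_sin_arg y]
    ring
  by_contra! hlt
  have : 0 < ‖y‖ * ‖x‖ * Real.sin (arg x - arg y) :=
    mul_pos (by positivity) (sin_pos_of_pos_of_lt_pi (by linarith) hxy)
  rw [← neg_sub, Real.sin_neg] at him
  linarith

lemma im_exp_mul_mul_conj_exp_mul_nonneg {c : ℂ} (hc₀ : -π ≤ c.im) (hc₁ : c.im ≤ 0)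
    {t u : ℝ} (htu : t ≤ u) (hut : u ≤ t + 1) :
    0 ≤ (exp (c * t) * conj (exp (c * u))).im := by
  rw [← Complex.exp_conj, ← Complex.exp_add, exp_im]
  refine mul_nonneg (Real.exp_pos _).le (sin_nonneg_of_nonneg_of_le_pi ?_ ?_) <;>
  · simp only [add_im, mul_im, conj_im, ofReal_re, ofReal_im]
    nlinarith

lemma im_integral_mul_conj_integral_nonneg {c : ℂ} (hc₀ : -π ≤ c.im) (hc₁ : c.im ≤ 0)
    {ρ : ℝ} (hρ₀ : 0 ≤ ρ) (hρ₁ : ρ ≤ 1) :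
    0 ≤ ((∫ t in (0 : ℝ)..ρ, exp (c * t)) * conj (∫ u in ρ..1, exp (c * u))).im := by
  have him {f : ℝ → ℂ} (hf : Continuous f) (a b : ℝ) :
      (∫ x in a..b, f x).im = ∫ x in a..b, (f x).im := by
    simpa using (intervalIntegral.intervalIntegral_im (hf.intervalIntegrable a b)).symm
  rw [← intervalIntegral.integral_mul_const, him (by fun_prop)]
  refine intervalIntegral.integral_nonneg hρ₀ fun t ht ↦ ?_
  rw [← intervalIntegral.intervalIntegral_conj, ← intervalIntegral.integral_const_mul,
    him (by fun_prop)]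
  exact intervalIntegral.integral_nonneg hρ₁ fun u hu ↦
    im_exp_mul_mul_conj_exp_mul_nonneg hc₀ hc₁ (ht.2.trans hu.1) (by linarith [ht.1, hu.2])

lemma im_exp_mul_sub_one_mul_conj_exp_sub_one_nonneg {c : ℂ} (hc₀ : -π ≤ c.im) (hc₁ : c.im ≤ 0)
    {ρ : ℝ} (hρ₀ : 0 ≤ ρ) (hρ₁ : ρ ≤ 1) :
    0 ≤ ((exp (c * ρ) - 1) * conj (exp c - 1)).im := by
  rcases eq_or_ne c 0 with rfl | hc
  · simp
  have hint (a b : ℝ) : exp (c * b) - exp (c * a) = c * ∫ t in a..b, exp (c * t) := by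
    rw [integral_exp_mul_complex hc]; field_simp
  have hcont : Continuous fun t : ℝ ↦ exp (c * t) := by fun_prop
  set A := ∫ t in (0 : ℝ)..ρ, exp (c * t)
  set B := ∫ t in ρ..1, exp (c * t)
  have hA : exp (c * ρ) - 1 = c * A := by simpa using hint 0 ρ
  have hAB : exp c - 1 = c * (A + B) := by
    rw [intervalIntegral.integral_add_adjacent_intervals (hcont.intervalIntegrable _ _)
      (hcont.intervalIntegrable _ _), ← hint]
    simp
  calc 0 ≤ normSq c * (A * conj B).im :=
        mul_nonneg (normSq_nonneg c) (im_integral_mul_conj_integral_nonneg hc₀ hc₁ hρ₀ hρ₁)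
    _ = ((exp (c * ρ) - 1) * conj (exp c - 1)).im := by
      rw [hA, hAB, map_mul, map_add, mul_mul_mul_comm, mul_conj, mul_add, mul_conj, im_ofReal_mul,
        add_im, ofReal_im, zero_add]

lemma im_one_sub_one_sub_cpow_pos {x : ℂ} (hx : 0 < x.im) {ρ : ℝ} (hρ₀ : 0 < ρ) (hρ₁ : ρ ≤ 1) :
    0 < (1 - (1 - x) ^ (ρ : ℂ)).im := by
  have hv : (1 - x).im < 0 := by simpa using hx
  have hv0 : 1 - x ≠ 0 := fun h ↦ by simp [h] at hv
  have harg : arg (1 - x) * ρ < 0 := mul_neg_of_neg_of_pos (arg_neg_iff.2 hv) hρ₀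
  rw [sub_im, one_im, zero_sub, neg_pos, cpow_def_of_ne_zero hv0, exp_im]
  refine mul_neg_of_pos_of_neg (Real.exp_pos _) (sin_neg_of_neg_of_neg_pi_lt ?_ ?_) <;>
  · simp only [mul_im, log_re, log_im, ofReal_re, ofReal_im, mul_zero]
    nlinarith [neg_pi_lt_arg (1 - x)]

lemma arg_le_arg_one_sub_one_sub_cpow {x : ℂ} (hx : 0 < x.im) {ρ : ℝ} (hρ₀ : 0 < ρ)
    (hρ₁ : ρ ≤ 1) : arg x ≤ arg (1 - (1 - x) ^ (ρ : ℂ)) := by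
  have hy := im_one_sub_one_sub_cpow_pos hx hρ₀ hρ₁
  have hv : (1 - x).im < 0 := by simpa using hx
  have hv0 : 1 - x ≠ 0 := fun h ↦ by simp [h] at hv
  have key := im_exp_mul_sub_one_mul_conj_exp_sub_one_nonneg (c := log (1 - x))
    (by rw [log_im]; exact (neg_pi_lt_arg _).le) (by rw [log_im]; exact (arg_neg_iff.2 hv).le)
    hρ₀.le hρ₁
  rw [exp_log hv0, ← cpow_def_of_ne_zero hv0, sub_sub_cancel_left, map_neg, ← neg_sub 1,
    neg_mul_neg] at key
  exact arg_le_arg_of_im_mul_conj_nonneg (fun h ↦ by simp [h] at hx) (fun h ↦ by simp [h] at hy)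
    (by linarith [arg_lt_pi_iff.2 (Or.inr hx.ne'), arg_pos_of_im_pos hy]) key

lemma one_sub_one_sub_conj_cpow {x : ℂ} (hx : x.im ≠ 0) (ρ : ℝ) :
    1 - (1 - conj x) ^ (ρ : ℂ) = conj (1 - (1 - x) ^ (ρ : ℂ)) := by
  have harg : arg (1 - x) ≠ π := fun h ↦ hx (by simpa using (arg_eq_pi_iff.1 h).2)
  rw [show 1 - conj x = conj (1 - x) by simp, conj_cpow _ _ harg, conj_ofReal, map_sub, map_one]

lemma arg1_eq_arg_of_im_pos {x : ℂ} (hx : 0 < x.im) : arg1 x = arg x := by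
  rw [arg1, arg_neg_eq_arg_sub_pi_of_im_pos hx, sub_add_cancel]

lemma arg1_conj {x : ℂ} (hx : -x ∈ slitPlane) : arg1 (conj x) = 2 * π - arg1 x := by
  rw [arg1, arg1, ← map_neg, arg_conj, if_neg (slitPlane_arg_ne_pi hx)]
  ring

lemma arg1_ofReal_of_neg {x : ℝ} (hx : x < 0) : arg1 x = π := by
  rw [arg1, ← ofReal_neg, arg_ofReal_of_nonneg (by linarith), zero_add]

lemma neg_mem_slitPlane_iff_arg1_lt {x : ℂ} : -x ∈ slitPlane ↔ x ≠ 0 ∧ arg1 x < 2 * π := by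
  rw [mem_slitPlane_iff_arg, neg_ne_zero, and_comm, arg1, ← (arg_le_pi _).lt_iff_ne]
  constructor <;> rintro ⟨h1, h2⟩ <;> exact ⟨h1, by linarith⟩

lemma norm_mul_exp_arg1_mul_I (x : ℂ) : ‖x‖ * exp (arg1 x * I) = x := by
  rw [arg1, ofReal_add, add_mul, Complex.exp_add, exp_pi_mul_I, ← mul_assoc, ← norm_neg x,
    norm_mul_exp_arg_mul_I, mul_neg_one, neg_neg]

lemma arg1_ofReal_mul_exp {r β : ℝ} (hr : 0 < r) (hβ₀ : 0 < β) (hβ : β ≤ 2 * π) :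
    arg1 (r * exp (β * I)) = β := by
  have hneg : -(r * exp (β * I)) = r * exp ((β - π : ℝ) * I) := by
    rw [ofReal_sub, sub_mul, Complex.exp_sub, exp_pi_mul_I]
    ring
  rw [arg1, hneg, exp_mul_I, arg_mul_cos_add_sin_mul_I hr ⟨by linarith, by linarith⟩,
    sub_add_cancel]

lemma arg1_div {x s : ℂ} (hx : x ≠ 0) (hs : s ≠ 0) (h₀ : arg s < arg1 x)
    (h : arg1 x - arg s ≤ 2 * π) : arg1 (x / s) = arg1 x - arg s := by
  conv_lhs => rw [← norm_mul_exp_arg1_mul_I x, ← norm_mul_exp_arg_mul_I s]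
  rw [mul_div_mul_comm, ← Complex.exp_sub, ← sub_mul, ← ofReal_sub, ← ofReal_div]
  exact arg1_ofReal_mul_exp (by positivity) (by linarith) h

lemma log_neg_add_pi_mul_I {u : ℂ} (hu : 0 < u.im) : log (-u) + π * I = log u := by
  apply Complex.ext <;> simp [log_re, log_im, arg_neg_eq_arg_sub_pi_of_im_pos hu]

lemma arg1_mul_cpow1 {s u : ℂ} (hs : s ≠ 0) (hu : 0 < u.im) {α : ℝ}
    (h₀ : 0 < arg s + α * arg u) (h : arg s + α * arg u ≤ 2 * π) :
    arg1 (s * cpow1 u α) = arg s + α * arg u := by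
  have hpolar : s * cpow1 u α =
      ((‖s‖ * Real.exp (α * Real.log ‖u‖) : ℝ) : ℂ) * exp ((arg s + α * arg u : ℝ) * I) := by
    rw [cpow1, log_neg_add_pi_mul_I hu]
    nth_rw 1 [← norm_mul_exp_arg_mul_I s]
    rw [Complex.log]
    push_cast
    rw [mul_assoc, mul_assoc, ← Complex.exp_add, ← Complex.exp_add]
    congr 2
    ring
  rw [hpolar]
  exact arg1_ofReal_mul_exp (by positivity) h₀ h

lemma arg1_one_sub_one_sub_cpow_mem_Ioo_of_im_pos {x : ℂ} (hx : 0 < x.im) {ρ : ℝ} (hρ₀ : 0 < ρ)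
    (hρ₁ : ρ ≤ 1) {a b : ℝ} (hb : π ≤ b) (hxab : arg1 x ∈ Ioo a b) :
    0 < (1 - (1 - x) ^ (ρ : ℂ)).im ∧ arg1 (1 - (1 - x) ^ (ρ : ℂ)) ∈ Ioo a b := by
  have hy := im_one_sub_one_sub_cpow_pos hx hρ₀ hρ₁
  rw [arg1_eq_arg_of_im_pos hx] at hxab
  rw [arg1_eq_arg_of_im_pos hy]
  exact ⟨hy, hxab.1.trans_le (arg_le_arg_one_sub_one_sub_cpow hx hρ₀ hρ₁),
    (arg_lt_pi_iff.2 (Or.inr hy.ne')).trans_le hb⟩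

lemma arg1_one_sub_one_sub_cpow_mem_Ioo {x : ℂ} (hx : -x ∈ slitPlane) {ρ : ℝ} (hρ₀ : 0 < ρ)
    (hρ₁ : ρ ≤ 1) {a b : ℝ} (ha : a ≤ π) (hb : π ≤ b) (hxab : arg1 x ∈ Ioo a b) :
    1 - (1 - x) ^ (ρ : ℂ) ≠ 0 ∧ arg1 (1 - (1 - x) ^ (ρ : ℂ)) ∈ Ioo a b := by
  rcases lt_trichotomy x.im 0 with hneg | hreal | hpos
  · have hxab' : arg1 (conj x) ∈ Ioo (2 * π - b) (2 * π - a) := by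
      rw [arg1_conj hx]
      exact ⟨by linarith [hxab.2], by linarith [hxab.1]⟩
    obtain ⟨hy, hyab⟩ := arg1_one_sub_one_sub_cpow_mem_Ioo_of_im_pos (by simpa using hneg) hρ₀ hρ₁
      (by linarith) hxab'
    rw [one_sub_one_sub_conj_cpow hneg.ne] at hy hyab
    rw [conj_im, neg_pos] at hy
    rw [arg1_conj (mem_slitPlane_iff.2 (Or.inr (by simpa using hy.ne)))] at hyab
    exact ⟨fun h ↦ by simp [h] at hy, by linarith [hyab.2], by linarith [hyab.1]⟩
  · obtain ⟨t, rfl⟩ : ∃ t : ℝ, x = t := ⟨x.re, ext rfl (by simp [hreal])⟩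
    have ht : t < 0 := by simpa using mem_slitPlane_iff.1 hx
    have hy : 1 - (1 - t) ^ ρ < 0 := by linarith [Real.one_lt_rpow (by linarith : 1 < 1 - t) hρ₀]
    rw [arg1_ofReal_of_neg ht] at hxab
    rw [← ofReal_one, ← ofReal_sub, ← ofReal_cpow (by linarith), ← ofReal_sub,
      arg1_ofReal_of_neg hy]
    exact ⟨ofReal_ne_zero.2 hy.ne, hxab⟩
  · obtain ⟨hy, hyab⟩ := arg1_one_sub_one_sub_cpow_mem_Ioo_of_im_pos hpos hρ₀ hρ₁ hb hxab
    exact ⟨fun h ↦ by simp [h] at hy, hyab⟩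

lemma arg_bounds_of_admissible {α σ : ℝ} (hα : 0 < α)
    (h₁ : α ≤ 1 → (1 - α) * π ≤ σ ∧ σ ≤ π) (h₂ : 1 < α → 0 ≤ σ ∧ σ ≤ (2 - α) * π) :
    0 ≤ σ ∧ σ ≤ π ∧ π ≤ σ + α * π ∧ σ + α * π ≤ 2 * π := by
  rcases le_or_gt α 1 with h | h
  · obtain ⟨hlo, hhi⟩ := h₁ h
    refine ⟨?_, hhi, ?_, ?_⟩ <;> nlinarith [pi_pos]
  · obtain ⟨hlo, hhi⟩ := h₂ h
    refine ⟨hlo, ?_, ?_, ?_⟩ <;> nlinarith [pi_pos]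

lemma im_neg_one_div_pos {z : ℂ} (hz : 0 < z.im) : 0 < (-1 / z).im := by
  rw [neg_div, neg_im, one_div, inv_im, neg_div, neg_neg]
  exact div_pos hz (normSq_pos.2 fun h ↦ by simp [h] at hz)

theorem stmt16_general (α : ℝ) (hα0 : 0 < α)
    (s : ℂ) (hs : s ≠ 0)
    (hadm1 : α ≤ 1 → (1 - α) * π ≤ Complex.arg s ∧ Complex.arg s ≤ π)
    (hadm2 : 1 < α → 0 ≤ Complex.arg s ∧ Complex.arg s ≤ (2 - α) * π)
    (r : ℝ) (hr : 1 ≤ r)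
    (w : ℂ → ℂ)
    (hw : ∀ z : ℂ, w z = (1 - (1 - s * cpow1 (-1/z) (α : ℂ)) ^ ((1/r : ℂ))) / s) :
    ∀ z : ℂ, 0 < z.im →
      w z ≠ 0 ∧ 0 < arg1 (w z) ∧ arg1 (w z) < α * π := by
  intro z hz
  obtain ⟨hσ₀, hσπ, hπσ, hσ₂⟩ := arg_bounds_of_admissible hα0 hadm1 hadm2
  have hu := im_neg_one_div_pos hz
  have hθ₀ : 0 < α * arg (-1 / z) := mul_pos hα0 (arg_pos_of_im_pos hu)
  have hθπ : α * arg (-1 / z) < α * π :=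
    mul_lt_mul_of_pos_left (arg_lt_pi_iff.2 (Or.inr hu.ne')) hα0
  have hx := arg1_mul_cpow1 hs hu (α := α) (by linarith) (by linarith)
  have hx0 : s * cpow1 (-1 / z) α ≠ 0 := mul_ne_zero hs (Complex.exp_ne_zero _)
  obtain ⟨hy0, hy⟩ := arg1_one_sub_one_sub_cpow_mem_Ioo
    (neg_mem_slitPlane_iff_arg1_lt.2 ⟨hx0, by linarith⟩) (ρ := 1 / r) (by positivity)
    ((div_le_one (by linarith)).2 hr) hσπ hπσ (by rw [hx]; constructor <;> linarith)
  rw [hw, show (1 / r : ℂ) = ((1 / r : ℝ) : ℂ) by push_cast; rfl,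
    arg1_div hy0 hs hy.1 (by linarith [hy.2])]
  exact ⟨div_ne_zero hy0 hs, by linarith [hy.1], by linarith [hy.2]⟩

/-- under the admissibility condition on `(α, s)`
(`(1-α)π ≤ arg s ≤ π` if `α ≤ 1`; `0 ≤ arg s ≤ (2-α)π` if `α > 1`), for every
`r ≥ 1` the function `z ↦ (1 - (1 - s(-1/z)^α)^{1/r})/s` maps the upper
half-plane into the open sector `{w ≠ 0 : 0 < arg w < απ}` (argument measured in
`(0,2π]`). -/
theorem stmt16 (α : ℝ) (hα0 : 0 < α) (hα2 : α ≤ 2)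
    (s : ℂ) (hs : s ≠ 0)
    (hadm1 : α ≤ 1 → (1 - α) * π ≤ Complex.arg s ∧ Complex.arg s ≤ π)
    (hadm2 : 1 < α → 0 ≤ Complex.arg s ∧ Complex.arg s ≤ (2 - α) * π)
    (r : ℝ) (hr : 1 ≤ r)
    (w : ℂ → ℂ)
    (hw : ∀ z : ℂ, w z = (1 - (1 - s * cpow1 (-1/z) (α : ℂ)) ^ ((1/r : ℂ))) / s) :
    ∀ z : ℂ, 0 < z.im →
      w z ≠ 0 ∧ 0 < arg1 (w z) ∧ arg1 (w z) < α * π :=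
  stmt16_general α hα0 s hs hadm1 hadm2 r hr w hw
end

section
/- For α ∈ (0,2], s with (α,s) admissible, and for z in a truncated cone Γ ⊂ ℂ₊ with M large, the identity -1/((1 - (1 - (s/2)(-1/z)^α)²)/s)^{1/α} = z/(1 - (s/4)(-1/z)^α)^{1/α} holds, where (1 - (s/4)(-1/z)^α)^{1/α} is defined via the binomial series Σ C(1/α, n) w^n for w = -(s/4)(-1/z)^α with |w| < 1, and (-1/z)^α uses the log branch with imaginary part in (0,2π). -/
open Real Complex

/-- The generalized binomial series `(1+w)^{1/α} = Σₙ C(1/α, n) wⁿ`. -/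
noncomputable def binomSeries (α : ℝ) (w : ℂ) : ℂ :=
  ∑' n : ℕ, ((∏ i ∈ Finset.range n, ((1/α : ℂ) - i)) / (n.factorial : ℂ)) * w ^ n

lemma hasDerivAt_pow_branch (c : ℂ) {z : ℂ} (h : 0 < 1 + z.re) :
    HasDerivAt (fun y => Complex.exp (c * Complex.log (1 + y)))
      (c * Complex.exp ((c - 1) * Complex.log (1 + z))) z := by
  have h1 : (1 : ℂ) + z ∈ Complex.slitPlane := by
    rw [Complex.mem_slitPlane_iff]
    left; simpa using h
  have hne : (1 : ℂ) + z ≠ 0 := Complex.slitPlane_ne_zero h1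
  have hlog : HasDerivAt (fun y : ℂ => Complex.log (1 + y)) ((1 + z)⁻¹) z := by
    simpa using ((hasDerivAt_id z).const_add 1).clog h1
  have := ((hlog.const_mul c).cexp)
  refine this.congr_deriv ?_
  rw [show (c - 1) * Complex.log (1 + z)
      = c * Complex.log (1 + z) + -(Complex.log (1 + z)) by ring,
    Complex.exp_add, Complex.exp_neg, Complex.exp_log hne]
  ring

lemma iteratedDeriv_pow_branch (r : ℂ) (n : ℕ) :
    ∀ z : ℂ, 0 < 1 + z.re →
      iteratedDeriv n (fun y => Complex.exp (r * Complex.log (1 + y))) z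
        = (∏ i ∈ Finset.range n, (r - i)) * Complex.exp ((r - n) * Complex.log (1 + z)) := by
  induction n with
  | zero => intro z _; simp
  | succ n ih =>
    intro z hz
    have hopen : IsOpen {y : ℂ | 0 < 1 + y.re} :=
      isOpen_lt continuous_const (continuous_const.add Complex.continuous_re)
    have hev : (iteratedDeriv n (fun y => Complex.exp (r * Complex.log (1 + y)))) =ᶠ[nhds z]
        fun y => (∏ i ∈ Finset.range n, (r - i)) * Complex.exp ((r - n) * Complex.log (1 + y)) := by
      filter_upwards [hopen.mem_nhds hz] with y hy using ih y hy
    rw [iteratedDeriv_succ, hev.deriv_eq,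
      ((hasDerivAt_pow_branch (r - n) hz).const_mul (∏ i ∈ Finset.range n, (r - i))).deriv,
      Finset.prod_range_succ]
    have : (r - ((n + 1 : ℕ) : ℂ)) = r - n - 1 := by push_cast; ring
    rw [this]
    ring

lemma tsum_binom (r : ℂ) {w : ℂ} (hw : ‖w‖ < 1) :
    ∑' n : ℕ, ((∏ i ∈ Finset.range n, (r - i)) / (n.factorial : ℂ)) * w ^ n
      = Complex.exp (r * Complex.log (1 + w)) := by
  have hdiff : DifferentiableOn ℂ (fun y => Complex.exp (r * Complex.log (1 + y)))
      (Metric.ball (0 : ℂ) 1) := by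
    intro y hy
    rw [Metric.mem_ball, dist_zero_right] at hy
    have h0 : 0 < 1 + y.re := by
      have h1 := Complex.abs_re_le_norm y
      have h2 : -‖y‖ ≤ y.re := neg_le_of_abs_le h1
      linarith
    exact (hasDerivAt_pow_branch r h0).differentiableAt.differentiableWithinAt
  have hmem : w ∈ Metric.ball (0 : ℂ) 1 := by
    rw [Metric.mem_ball, dist_zero_right]; simpa using hw
  have H := Complex.taylorSeries_eq_on_ball' hmem hdiff
  rw [← H]
  apply tsum_congr
  intro n
  rw [iteratedDeriv_pow_branch r n 0 (by norm_num)]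
  simp only [add_zero, Complex.log_one, mul_zero, Complex.exp_zero, mul_one, sub_zero]
  ring

lemma arcsin_le_of_le_sin {c x : ℝ} (hx0 : 0 ≤ x) (hc : c ≤ Real.sin x) :
    Real.arcsin c ≤ x := by
  rcases lt_or_ge x (π/2) with h | h
  · exact (Real.arcsin_le_iff_le_sin' ⟨by linarith [Real.pi_pos], h⟩).mpr hc
  · exact (Real.arcsin_le_pi_div_two c).trans h

set_option maxHeartbeats 1000000 in
/-- for admissible `(α,s)` and every `η > 0`, on a truncated cone
`Γ_{η,M}` with `M` large the identity
`-1/((1 - (1 - (s/2)(-1/z)^α)²)/s)^{1/α} = z/(1 - (s/4)(-1/z)^α)^{1/α}`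
holds, where the `1/α` power on the left uses the branch with
`Im log ∈ (0,2π)` and the one on the right is defined by the binomial series.
This shows `φ^α_{s,2}(z) = z²·G_{a^α_{s/4}}(z) - z`. -/
theorem stmt18 (α : ℝ) (hα0 : 0 < α) (hα2 : α ≤ 2)
    (s : ℂ) (hs : s ≠ 0)
    (hadm1 : α ≤ 1 → (1 - α) * π ≤ Complex.arg s ∧ Complex.arg s ≤ π)
    (hadm2 : 1 < α → 0 ≤ Complex.arg s ∧ Complex.arg s ≤ (2 - α) * π)
    (η : ℝ) (hη : 0 < η) :
    ∃ M > 0, ∀ z : ℂ, M < z.im → η * |z.re| < z.im →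
      -1 / cpow1 ((1 - (1 - (s/2) * cpow1 (-1/z) (α : ℂ)) ^ (2 : ℕ)) / s) ((1/α : ℂ))
        = z / binomSeries α (-(s/4) * cpow1 (-1/z) (α : ℂ)) := by
  have hπ := Real.pi_pos
  have hαC : (α : ℂ) ≠ 0 := Complex.ofReal_ne_zero.mpr hα0.ne'
  set S := Real.sqrt (η^2 + 1) with hSdef
  have hS2 : S^2 = η^2 + 1 := Real.sq_sqrt (by positivity)
  have hSpos : 0 < S := Real.sqrt_pos.mpr (by positivity)
  set c0 := η / S with hc0def
  have hc0pos : 0 < c0 := div_pos hη hSpos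
  set θ := Real.arcsin c0 with hθdef
  have hθpos : 0 < θ := Real.arcsin_pos.mpr hc0pos
  have hθle : θ ≤ π/2 := Real.arcsin_le_pi_div_two _
  set δ := min (1/2 : ℝ) (α * θ / (2*π)) with hδdef
  have hδpos : 0 < δ := lt_min (by norm_num) (by positivity)
  have hδhalf : δ ≤ 1/2 := min_le_left _ _
  have hδθ : δ ≤ α * θ / (2*π) := min_le_right _ _
  set B := ‖s‖ / 4 + 1 with hBdef
  have hBpos : 0 < B := by positivity
  have hBs : ‖s‖ / 4 < B := by rw [hBdef]; linarith
  refine ⟨max 1 ((B/δ) ^ (1/α) : ℝ), lt_of_lt_of_le one_pos (le_max_left _ _), ?_⟩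
  intro z hz1 hz2
  have him : 0 < z.im := lt_trans (lt_of_lt_of_le one_pos (le_max_left _ _)) hz1
  have hz0 : z ≠ 0 := by
    intro h; rw [h] at him; simp at him
  have hzabs : 0 < ‖z‖ := norm_pos_iff.mpr hz0
  have habsz : (B/δ) ^ (1/α) < ‖z‖ := by
    have h1 : z.im ≤ ‖z‖ := (le_abs_self _).trans (Complex.abs_im_le_norm z)
    have h2 : (B/δ) ^ (1/α) ≤ max 1 ((B/δ) ^ (1/α)) := le_max_right _ _
    linarith
  have hrp : B/δ < ‖z‖ ^ α := by
    have h0 : (0:ℝ) ≤ (B/δ) ^ (1/α) := Real.rpow_nonneg (by positivity) _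
    have h1 := Real.rpow_lt_rpow h0 habsz hα0
    rwa [← Real.rpow_mul (by positivity : (0:ℝ) ≤ B/δ), one_div,
      inv_mul_cancel₀ hα0.ne', Real.rpow_one] at h1
  have harg : z.arg ≠ π := by
    intro h
    rw [Complex.arg_eq_pi_iff] at h
    linarith [h.2]
  set L := Complex.log z with hL
  set t := (α : ℂ) * ((π : ℂ) * Complex.I - L) with ht
  set u := cpow1 (-1/z) (α : ℂ) with hu
  have hu_exp : u = Complex.exp t := by
    rw [hu]; unfold cpow1
    rw [show -(-1/z) = z⁻¹ by ring, Complex.log_inv z harg]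
    exact congrArg Complex.exp (by rw [ht]; ring)
  have habs_u : ‖u‖ = ‖z‖ ^ (-α) := by
    rw [hu_exp, Complex.norm_exp]
    have h1 : t.re = -(α * Real.log (‖z‖)) := by
      rw [ht, hL]
      simp [Complex.mul_re, Complex.sub_re, Complex.sub_im, Complex.log_re]
    rw [h1, Real.rpow_def_of_pos hzabs]
    ring_nf
  have hεδ : ‖s‖ / 4 * ‖z‖ ^ (-α) < δ := by
    have h2 : ‖z‖ ^ (-α) < δ / B := by
      rw [Real.rpow_neg hzabs.le]
      have h3 : (B/δ)⁻¹ = δ/B := by rw [inv_div]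
      rw [← h3]
      exact inv_strictAnti₀ (by positivity) hrp
    have h4 : (0:ℝ) < ‖s‖ := norm_pos_iff.mpr hs
    calc ‖s‖ / 4 * ‖z‖ ^ (-α)
        < ‖s‖ / 4 * (δ/B) := by
          apply mul_lt_mul_of_pos_left h2 (by positivity)
      _ ≤ B * (δ/B) := by
          apply mul_le_mul_of_nonneg_right hBs.le (by positivity)
      _ = δ := by field_simp
  set w := -(s/4) * u with hw
  have habs_w : ‖w‖ < δ := by
    have h1 : ‖w‖ = ‖s‖ / 4 * ‖u‖ := by
      rw [hw]
      rw [norm_mul, norm_neg, norm_div]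
      norm_num
    rw [h1, habs_u]
    exact hεδ
  set v := 1 + w with hv
  have hwre : |w.re| < δ := lt_of_le_of_lt (Complex.abs_re_le_norm w) habs_w
  have hvre : (1:ℝ)/2 ≤ v.re := by
    have h1 : v.re = 1 + w.re := by rw [hv]; simp
    have h2 := abs_lt.mp hwre
    rw [h1]; linarith
  have hv0 : v ≠ 0 := by
    intro h
    rw [h] at hvre
    norm_num at hvre
  have hvabs_half : (1:ℝ)/2 ≤ ‖v‖ :=
    le_trans hvre ((le_abs_self _).trans (Complex.abs_re_le_norm v))
  set b := Complex.arg v with hb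
  have hbabs : |b| ≤ π/2 := Complex.abs_arg_le_pi_div_two_iff.mpr (by linarith)
  have hsinb : |Real.sin b| ≤ 2*δ := by
    rw [hb, Complex.sin_arg, abs_div, _root_.abs_of_nonneg (norm_nonneg v)]
    have h3 : |v.im| < δ := by
      have h4 : v.im = w.im := by rw [hv]; simp
      rw [h4]
      exact lt_of_le_of_lt (Complex.abs_im_le_norm w) habs_w
    rw [div_le_iff₀ (by linarith : (0:ℝ) < ‖v‖)]
    nlinarith [abs_nonneg v.im]
  have hbbound : |b| ≤ α * θ / 2 := by
    have hj := Real.mul_abs_le_abs_sin hbabs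
    have h4 : |b| ≤ π * δ := by
      have h5 : 2/π * |b| ≤ 2*δ := le_trans hj hsinb
      have h6 : |b| = (π/2) * (2/π * |b|) := by field_simp
      calc |b| = (π/2) * (2/π * |b|) := h6
        _ ≤ (π/2) * (2*δ) := by nlinarith
        _ = π * δ := by ring
    calc |b| ≤ π * δ := h4
      _ ≤ π * (α*θ/(2*π)) := mul_le_mul_of_nonneg_left hδθ hπ.le
      _ = α*θ/2 := by field_simp
  set a := Complex.arg z with ha
  have hsina : c0 < Real.sin a := by
    rw [ha, Complex.sin_arg, hc0def, div_lt_div_iff₀ hSpos hzabs]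
    have h6 : (η * |z.re|)^2 < z.im^2 := by
      nlinarith [abs_nonneg z.re, mul_nonneg hη.le (abs_nonneg z.re)]
    have habs2 : ‖z‖ ^ 2 = z.re^2 + z.im^2 := by
      rw [Complex.sq_norm, Complex.normSq_apply]; ring
    have h5 : (η * ‖z‖)^2 < (z.im * S)^2 := by
      nlinarith [_root_.sq_abs z.re]
    exact lt_of_pow_lt_pow_left₀ 2 (by positivity) h5
  have ha1 : 0 < a := by
    by_contra h
    push_neg at h
    have := Real.sin_nonpos_of_nonpos_of_neg_pi_le h (Complex.neg_pi_lt_arg z).le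
    linarith
  have ha2 : a < π := by
    refine lt_of_le_of_ne (Complex.arg_le_pi z) ?_
    intro h
    rw [h, Real.sin_pi] at hsina
    linarith
  have hθa : θ ≤ a := arcsin_le_of_le_sin ha1.le hsina.le
  have hθa' : θ ≤ π - a := by
    apply arcsin_le_of_le_sin (by linarith)
    rw [Real.sin_pi_sub]
    exact hsina.le
  have him_t : (t - (π:ℂ)*Complex.I + Complex.log v).im = α * (π - a) - π + b := by
    rw [ht, hL, hb, ha]
    simp [Complex.add_im, Complex.sub_im, Complex.mul_im, Complex.log_im,
      Complex.sub_re, Complex.mul_re]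
    try ring
  have hkey : Complex.log (-(u * v)) = t - (π:ℂ)*Complex.I + Complex.log v := by
    have hexp : Complex.exp (t - (π:ℂ)*Complex.I + Complex.log v) = -(u*v) := by
      rw [Complex.exp_add, Complex.exp_sub, Complex.exp_pi_mul_I, Complex.exp_log hv0,
        ← hu_exp]
      ring
    rw [← hexp, Complex.log_exp]
    · rw [him_t]
      have h1 : α*θ ≤ α*(π - a) := mul_le_mul_of_nonneg_left hθa' hα0.le
      have h2 := (abs_le.mp hbbound).1
      have h3 : 0 < α*θ := by positivity
      linarith
    · rw [him_t]
      have h1 : α*(π - a) ≤ 2*(π - a) := mul_le_mul_of_nonneg_right hα2 (by linarith)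
      have h2 := (abs_le.mp hbbound).2
      have h3 : α*θ/2 ≤ θ := by nlinarith
      linarith
  have hE : (1 - (1 - (s/2) * u) ^ (2:ℕ)) / s = u * v := by
    rw [hv, hw]
    field_simp
    ring
  have hbin : binomSeries α w = Complex.exp ((1/(α:ℂ)) * Complex.log v) := by
    rw [hv]
    unfold binomSeries
    exact tsum_binom (1/(α:ℂ)) (lt_of_lt_of_le habs_w (by linarith))
  rw [hE, hbin]
  unfold cpow1
  rw [hkey]
  have hsimp : (1/(α:ℂ)) * (t - (π:ℂ)*Complex.I + Complex.log v + (π:ℂ)*Complex.I)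
      = ((π:ℂ)*Complex.I - L) + (1/(α:ℂ)) * Complex.log v := by
    rw [ht]
    field_simp
    ring
  rw [hsimp, Complex.exp_add]
  have h8 : Complex.exp ((π:ℂ)*Complex.I - L) = -(1/z) := by
    rw [Complex.exp_sub, Complex.exp_pi_mul_I, hL, Complex.exp_log hz0]
    ring
  rw [h8]
  have h9 := Complex.exp_ne_zero ((1/(α:ℂ)) * Complex.log v)
  field_simp
end
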